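/- arXiv:1611.01502 — 5 statements merged into one kernel-verified Lean document; each statement's English description precedes it below -/
import Mathlib

section
/- A space of quantities has no zero divisors if and only if every nonzero quantity is invertible under the product. -/
/-- A space of quantities over a field `F` with group of dimensions `D`
(a finitely generated free abelian group): a set `Q` with a surjective
projection `dim : Q → D`, an abelian monoid product for which `dim` is a
monoid homomorphism, and on each fiber a one-dimensional `F`-vector space
structure (addition `add` and scalar multiplication `smul`, with `zero A`
the zero of the fiber over `A`), with the product distributing over
fiberwise addition and associating with scalar multiplication. -/
structure QuantitySpace (F : Type*) [Field F] (D : Type*) [CommGroup D]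
    [Module.Free ℤ (Additive D)] [Module.Finite ℤ (Additive D)]
    (Q : Type*) where
  dim : Q → D
  dim_surj : Function.Surjective dim
  mul : Q → Q → Q
  one : Q
  mul_comm : ∀ q r, mul q r = mul r q
  mul_assoc : ∀ q r s, mul (mul q r) s = mul q (mul r s)
  one_mul : ∀ q, mul one q = q
  dim_mul : ∀ q r, dim (mul q r) = dim q * dim r
  dim_one : dim one = 1
  add : Q → Q → Q
  smul : F → Q → Q
  zero : D → Q
  dim_zero : ∀ A, dim (zero A) = A
  dim_add : ∀ q r, dim q = dim r → dim (add q r) = dim q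
  dim_smul : ∀ (α : F) q, dim (smul α q) = dim q
  add_comm : ∀ q r, dim q = dim r → add q r = add r q
  add_assoc : ∀ q r s, dim q = dim r → dim r = dim s →
    add (add q r) s = add q (add r s)
  zero_add : ∀ q, add (zero (dim q)) q = q
  add_neg : ∀ q, add q (smul (-1) q) = zero (dim q)
  one_smul : ∀ q, smul 1 q = q
  mul_smul : ∀ (α β : F) q, smul (α * β) q = smul α (smul β q)
  smul_add : ∀ (α : F) q r, dim q = dim r →
    smul α (add q r) = add (smul α q) (smul α r)
  add_smul : ∀ (α β : F) q, smul (α + β) q = add (smul α q) (smul β q)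
  /-- each fiber contains a nonzero vector -/
  exists_nonzero : ∀ A : D, ∃ q, dim q = A ∧ q ≠ zero A
  /-- each fiber is one-dimensional: a nonzero vector spans it -/
  fiber_gen : ∀ q r, dim q = dim r → q ≠ zero (dim q) → ∃ α : F, r = smul α q
  /-- and a nonzero vector is free -/
  smul_injective : ∀ (α β : F) q, q ≠ zero (dim q) → smul α q = smul β q → α = β
  mul_add : ∀ q r s, dim r = dim s → mul q (add r s) = add (mul q r) (mul q s)
  smul_mul : ∀ (α : F) q r, mul (smul α q) r = smul α (mul q r)

namespace QuantitySpace

variable {F : Type*} [Field F] {D D' : Type*} [CommGroup D] [CommGroup D']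
  [Module.Free ℤ (Additive D)] [Module.Finite ℤ (Additive D)]
  [Module.Free ℤ (Additive D')] [Module.Finite ℤ (Additive D')]
  {Q R : Type*}

/-- `q` is a zero element, i.e. the zero of its fiber. -/
def IsZero (S : QuantitySpace F D Q) (q : Q) : Prop := q = S.zero (S.dim q)

/-- The space has no zero divisors: a product of nonzero quantities is nonzero. -/
def NoZeroDiv (S : QuantitySpace F D Q) : Prop :=
  ∀ q r, ¬ S.IsZero q → ¬ S.IsZero r → ¬ S.IsZero (S.mul q r)

/-- A section of the space: `dim ∘ σ = id`. -/
def IsSection (S : QuantitySpace F D Q) (σ : D → Q) : Prop :=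
  ∀ A, S.dim (σ A) = A

/-- A system of units: a nonzero section. -/
def IsNonzeroSection (S : QuantitySpace F D Q) (σ : D → Q) : Prop :=
  S.IsSection σ ∧ ∀ A, ¬ S.IsZero (σ A)

/-- A coherent section: a group homomorphism. -/
def IsCoherent (S : QuantitySpace F D Q) (σ : D → Q) : Prop :=
  σ 1 = S.one ∧ ∀ A B, σ (A * B) = S.mul (σ A) (σ B)

/-- `T` is a subspace: with the operations of `Q` restricted to `T` and the
restricted projection, `T` is itself a space of quantities (closed under the
operations, contains the identity, the zeros and a nonzero element of each of
its fibers, and its set of dimensions is closed under inverses, so that it is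
a subgroup). -/
def IsSubspace (S : QuantitySpace F D Q) (T : Set Q) : Prop :=
  S.one ∈ T ∧
  (∀ q ∈ T, ∀ r ∈ T, S.mul q r ∈ T) ∧
  (∀ q ∈ T, ∀ r ∈ T, S.dim q = S.dim r → S.add q r ∈ T) ∧
  (∀ (α : F), ∀ q ∈ T, S.smul α q ∈ T) ∧
  (∀ q ∈ T, S.zero (S.dim q) ∈ T) ∧
  (∀ q ∈ T, ∃ r ∈ T, S.dim r = S.dim q ∧ r ≠ S.zero (S.dim q)) ∧
  (∀ q ∈ T, ∃ r ∈ T, S.dim r = (S.dim q)⁻¹)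

/-- A homomorphism of spaces of quantities: multiplicative, fiber-preserving,
and `F`-linear on each fiber. -/
def IsHom (S : QuantitySpace F D Q) (T : QuantitySpace F D' R) (ψ : Q → R) : Prop :=
  (∀ q r, ψ (S.mul q r) = T.mul (ψ q) (ψ r)) ∧
  (∀ q₁ q₂, S.dim q₁ = S.dim q₂ → T.dim (ψ q₁) = T.dim (ψ q₂)) ∧
  (∀ (α β : F) (q₁ q₂ : Q), S.dim q₁ = S.dim q₂ →
    ψ (S.add (S.smul α q₁) (S.smul β q₂)) = T.add (T.smul α (ψ q₁)) (T.smul β (ψ q₂)))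

end QuantitySpace

variable {F : Type*} [Field F] {D D' : Type*} [CommGroup D] [CommGroup D']
  [Module.Free ℤ (Additive D)] [Module.Finite ℤ (Additive D)]
  [Module.Free ℤ (Additive D')] [Module.Finite ℤ (Additive D')]
  {Q R : Type*}
open QuantitySpace

lemma smul_zero_eq (S : QuantitySpace F D Q) (q : Q) :
    S.smul 0 q = S.zero (S.dim q) := by
  have h := S.add_smul 1 (-1) q
  rw [show (1 : F) + -1 = 0 by ring, S.one_smul] at h
  rw [h, S.add_neg]

lemma mul_zero_eq (S : QuantitySpace F D Q) (q : Q) (A : D) :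
    S.mul q (S.zero A) = S.zero (A * S.dim q) := by
  obtain ⟨q', hq'⟩ := S.dim_surj A
  calc S.mul q (S.zero A) = S.mul (S.zero A) q := S.mul_comm _ _
    _ = S.mul (S.smul 0 q') q := by rw [← hq', ← smul_zero_eq]
    _ = S.smul 0 (S.mul q' q) := S.smul_mul _ _ _
    _ = S.zero (S.dim (S.mul q' q)) := smul_zero_eq _ _
    _ = S.zero (A * S.dim q) := by rw [S.dim_mul, hq']

theorem noZeroDiv_iff_invertible (S : QuantitySpace F D Q) :
    S.NoZeroDiv ↔ ∀ q : Q, ¬ S.IsZero q → ∃ s : Q, S.mul q s = S.one := by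
  constructor
  · intro hnzd q hq
    obtain ⟨t, ht, htne⟩ := S.exists_nonzero (S.dim q)⁻¹
    have htnz : ¬ S.IsZero t := by
      intro h; exact htne (by rw [← ht]; exact h)
    have hqt : ¬ S.IsZero (S.mul q t) := hnzd q t hq htnz
    have hdim : S.dim (S.mul q t) = S.dim S.one := by
      rw [S.dim_mul, ht, S.dim_one, mul_inv_cancel]
    obtain ⟨α, hα⟩ := S.fiber_gen (S.mul q t) S.one hdim hqt
    refine ⟨S.smul α t, ?_⟩
    rw [S.mul_comm, S.smul_mul, S.mul_comm t q, ← hα]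
  · intro hinv q r hq hr hqr
    obtain ⟨s, hs⟩ := hinv q hq
    apply hr
    have : S.mul s (S.mul q r) = S.mul s (S.zero (S.dim (S.mul q r))) := by
      rw [← hqr]
    rw [← S.mul_assoc, S.mul_comm s q, hs, S.one_mul, mul_zero_eq,
      S.dim_mul] at this
    have hds : S.dim s = (S.dim q)⁻¹ := by
      have h2 := congrArg S.dim hs
      rw [S.dim_mul, S.dim_one] at h2
      exact eq_inv_of_mul_eq_one_left (by rw [_root_.mul_comm]; exact h2)
    rw [hds] at this
    rw [show S.dim q * S.dim r * (S.dim q)⁻¹ = S.dim r by rw [_root_.mul_comm (S.dim q) (S.dim r), _root_.mul_assoc, mul_inv_cancel, mul_one]] at this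
    exact this
end

section
/- A space of quantities has no zero divisors if and only if there exists a coherent system of units, i.e., a group homomorphism σ : 𝒟 → Q with dim ∘ σ = id_𝒟 whose image contains no zero element. -/
variable {F : Type*} [Field F] {D D' : Type*} [CommGroup D] [CommGroup D']
  [Module.Free ℤ (Additive D)] [Module.Finite ℤ (Additive D)]
  [Module.Free ℤ (Additive D')] [Module.Finite ℤ (Additive D')]
  {Q R : Type*}
open QuantitySpace

theorem MonoidHom.exists_rightInverse_of_surjective {G H : Type*} [CommGroup G] [CommGroup H]
    [Module.Projective ℤ (Additive H)] (f : G →* H) (hf : Function.Surjective f) :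
    ∃ s : H →* G, ∀ A, f (s A) = A := by
  obtain ⟨s, hs⟩ :=
    Module.projective_lifting_property f.toAdditive.toIntLinearMap LinearMap.id hf
  exact ⟨MonoidHom.toAdditive.symm s.toAddMonoidHom,
    fun A => congrArg Additive.toMul (LinearMap.congr_fun hs (.ofMul A))⟩

namespace QuantitySpace

variable (S : QuantitySpace F D Q)

theorem zero_smul (q : Q) : S.smul 0 q = S.zero (S.dim q) := by
  rw [← add_neg_cancel (1 : F), S.add_smul, S.one_smul, S.add_neg]

theorem isZero_smul_iff {q : Q} (hq : ¬ S.IsZero q) (α : F) :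
    S.IsZero (S.smul α q) ↔ α = 0 := by
  rw [IsZero, S.dim_smul, ← S.zero_smul]
  exact ⟨S.smul_injective α 0 q hq, fun h => by rw [h]⟩

theorem zero_mul (A : D) (q : Q) : S.mul (S.zero A) q = S.zero (A * S.dim q) := by
  have h := S.zero_smul (S.zero A)
  rw [S.dim_zero] at h
  rw [← h, S.smul_mul, S.zero_smul, S.dim_mul, S.dim_zero]

theorem not_isZero_one : ¬ S.IsZero S.one := by
  intro h
  rw [IsZero, S.dim_one] at h
  obtain ⟨q, hq, hne⟩ := S.exists_nonzero 1
  apply hne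
  rw [← S.one_mul q, h, S.zero_mul, _root_.one_mul, hq]

theorem smul_mul_smul (α β : F) (q r : Q) :
    S.mul (S.smul α q) (S.smul β r) = S.smul (α * β) (S.mul q r) := by
  rw [S.smul_mul, S.mul_comm q, S.smul_mul, S.mul_comm r, S.mul_smul]

variable {S}

theorem NoZeroDiv.exists_mul_eq_one (hS : S.NoZeroDiv) {q : Q} (hq : ¬ S.IsZero q) :
    ∃ r, ¬ S.IsZero r ∧ S.mul q r = S.one := by
  obtain ⟨r, hr, hne⟩ := S.exists_nonzero (S.dim q)⁻¹
  have hr' : ¬ S.IsZero r := by rwa [IsZero, hr]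
  -- `q * r` is a nonzero vector of the line over `1`, which `S.one` spans
  obtain ⟨α, hα⟩ := S.fiber_gen S.one (S.mul q r)
    (by rw [S.dim_one, S.dim_mul, hr, mul_inv_cancel]) S.not_isZero_one
  have hα0 : α ≠ 0 := by
    rw [Ne, ← S.isZero_smul_iff S.not_isZero_one, ← hα]
    exact hS q r hq hr'
  refine ⟨S.smul α⁻¹ r, (S.isZero_smul_iff hr' _).not.2 (inv_ne_zero hα0), ?_⟩
  rw [S.mul_comm, S.smul_mul, S.mul_comm r, hα, ← S.mul_smul, inv_mul_cancel₀ hα0,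
    S.one_smul]

noncomputable abbrev NoZeroDiv.nonzeroCommGroup (hS : S.NoZeroDiv) :
    CommGroup {q // ¬ S.IsZero q} where
  mul q r := ⟨S.mul q r, hS q r q.2 r.2⟩
  one := ⟨S.one, S.not_isZero_one⟩
  inv q := ⟨(hS.exists_mul_eq_one q.2).choose, (hS.exists_mul_eq_one q.2).choose_spec.1⟩
  mul_assoc q r s := Subtype.ext (S.mul_assoc q r s)
  one_mul q := Subtype.ext (S.one_mul q)
  mul_one q := Subtype.ext ((S.mul_comm _ _).trans (S.one_mul q))
  mul_comm q r := Subtype.ext (S.mul_comm q r)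
  inv_mul_cancel q :=
    Subtype.ext ((S.mul_comm _ _).trans (hS.exists_mul_eq_one q.2).choose_spec.2)

theorem NoZeroDiv.exists_coherent_nonzeroSection (hS : S.NoZeroDiv) :
    ∃ σ : D → Q, S.IsNonzeroSection σ ∧ S.IsCoherent σ := by
  let := hS.nonzeroCommGroup
  let dimHom : {q // ¬ S.IsZero q} →* D :=
    { toFun q := S.dim q
      map_one' := S.dim_one
      map_mul' q r := S.dim_mul q r }
  have hsurj : Function.Surjective dimHom := fun A =>
    let ⟨q, hq, hne⟩ := S.exists_nonzero A
    ⟨⟨q, by rwa [IsZero, hq]⟩, hq⟩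
  obtain ⟨σ, hσ⟩ := dimHom.exists_rightInverse_of_surjective hsurj
  exact ⟨fun A => σ A, ⟨hσ, fun A => (σ A).2⟩, congrArg Subtype.val σ.map_one,
    fun A B => congrArg Subtype.val (σ.map_mul A B)⟩

theorem IsNonzeroSection.exists_eq_smul {σ : D → Q} (hσ : S.IsNonzeroSection σ) {q : Q}
    (hq : ¬ S.IsZero q) : ∃ α ≠ 0, q = S.smul α (σ (S.dim q)) := by
  obtain ⟨α, hα⟩ := S.fiber_gen (σ (S.dim q)) q (hσ.1 _) (hσ.2 _)
  refine ⟨α, fun h0 => hq ?_, hα⟩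
  rwa [← S.isZero_smul_iff (hσ.2 (S.dim q)), ← hα] at h0

theorem IsNonzeroSection.noZeroDiv {σ : D → Q} (hσ : S.IsNonzeroSection σ)
    (hmul : ∀ A B, σ (A * B) = S.mul (σ A) (σ B)) : S.NoZeroDiv := by
  intro q r hq hr
  obtain ⟨α, hα, hq'⟩ := hσ.exists_eq_smul hq
  obtain ⟨β, hβ, hr'⟩ := hσ.exists_eq_smul hr
  have hqr : S.mul q r = S.smul (α * β) (σ (S.dim q * S.dim r)) := by
    rw [hmul, ← S.smul_mul_smul, ← hq', ← hr']
  rw [hqr, S.isZero_smul_iff (hσ.2 _)]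
  exact mul_ne_zero hα hβ

end QuantitySpace

theorem noZeroDiv_iff_coherent_units (S : QuantitySpace F D Q) :
    S.NoZeroDiv ↔ ∃ σ : D → Q, S.IsNonzeroSection σ ∧ S.IsCoherent σ :=
  ⟨NoZeroDiv.exists_coherent_nonzeroSection,
    fun ⟨_, hσ, _, hmul⟩ => hσ.noZeroDiv hmul⟩
end

section
/- Let Q be a space of quantities free of zero divisors with a system of units σ and numerical value map ν(q) = q·σ(dim(q))⁻¹. Then ν is multiplicative (ν(qr) = ν(q)ν(r) for all q, r) if and only if σ is a coherent section. -/
variable {F : Type*} [Field F] {D D' : Type*} [CommGroup D] [CommGroup D']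
  [Module.Free ℤ (Additive D)] [Module.Finite ℤ (Additive D)]
  [Module.Free ℤ (Additive D')] [Module.Finite ℤ (Additive D')]
  {Q R : Type*}
open QuantitySpace

theorem numerical_value_multiplicative_iff_coherent (S : QuantitySpace F D Q)
    (hS : S.NoZeroDiv) (σ : D → Q) (hσ : S.IsNonzeroSection σ) (ν : Q → F)
    (hν : ∀ q r : Q, S.mul (σ (S.dim q)) r = S.one → S.smul (ν q) S.one = S.mul q r) :
    (∀ q r : Q, ν (S.mul q r) = ν q * ν r) ↔ S.IsCoherent σ := by

  obtain ⟨hsec, hnz⟩ := hσ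
  have hz : ∀ q : Q, S.smul 0 q = S.zero (S.dim q) := by
    intro q
    have h := S.add_smul 1 (-1) q
    rw [S.one_smul, S.add_neg] at h
    simpa using h
  have habs : ∀ (q : Q) (A : D), S.mul q (S.zero A) = S.zero (S.dim q * A) := by
    intro q A
    have h1 : S.zero A = S.smul 0 (S.zero A) := by rw [hz, S.dim_zero]
    calc S.mul q (S.zero A) = S.mul (S.smul 0 (S.zero A)) q := by
          rw [← h1, S.mul_comm]
      _ = S.smul 0 (S.mul (S.zero A) q) := S.smul_mul 0 _ q
      _ = S.zero (S.dim (S.mul (S.zero A) q)) := hz _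
      _ = S.zero (S.dim q * A) := by rw [S.dim_mul, S.dim_zero, _root_.mul_comm]
  have hone : S.one ≠ S.zero (S.dim S.one) := by
    intro h
    obtain ⟨p, hp, hp0⟩ := S.exists_nonzero 1
    apply hp0
    calc p = S.mul S.one p := (S.one_mul p).symm
      _ = S.mul p S.one := S.mul_comm _ _
      _ = S.mul p (S.zero (S.dim S.one)) := by rw [← h]
      _ = S.zero (S.dim p * S.dim S.one) := habs _ _
      _ = S.zero 1 := by rw [hp, S.dim_one, _root_.one_mul]
  have hinj : ∀ α β : F, S.smul α S.one = S.smul β S.one → α = β :=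
    fun α β => S.smul_injective α β S.one hone
  have hinv : ∀ A : D, ∃ r, S.mul (σ A) r = S.one := by
    intro A
    obtain ⟨p, hp, hp0⟩ := S.exists_nonzero A⁻¹
    have hpz : ¬ S.IsZero p := by
      intro h
      simp only [QuantitySpace.IsZero, hp] at h
      exact hp0 h
    have hnzm : ¬ S.IsZero (S.mul (σ A) p) := hS _ _ (hnz A) hpz
    have hdim : S.dim (S.mul (σ A) p) = 1 := by
      rw [S.dim_mul, hsec, hp, mul_inv_cancel]
    obtain ⟨α, hα⟩ := S.fiber_gen S.one (S.mul (σ A) p) (by rw [S.dim_one, hdim]) hone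
    have hα0 : α ≠ 0 := by
      intro h0
      apply hnzm
      show S.mul (σ A) p = S.zero (S.dim (S.mul (σ A) p))
      rw [hdim, hα, h0, hz, S.dim_one]
    refine ⟨S.smul α⁻¹ p, ?_⟩
    have hc : S.mul (σ A) (S.smul α⁻¹ p) = S.smul α⁻¹ (S.mul (σ A) p) := by
      rw [S.mul_comm, S.smul_mul, S.mul_comm]
    rw [hc, hα, ← S.mul_smul, inv_mul_cancel₀ hα0, S.one_smul]
  have hval : ∀ q : Q, q = S.smul (ν q) (σ (S.dim q)) := by
    intro q
    obtain ⟨r, hr⟩ := hinv (S.dim q)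
    have h := hν q r hr
    calc q = S.mul q S.one := (S.one_mul q).symm.trans (S.mul_comm _ _)
      _ = S.mul q (S.mul (σ (S.dim q)) r) := by rw [hr]
      _ = S.mul (σ (S.dim q)) (S.mul q r) := by
          rw [← S.mul_assoc, S.mul_comm q (σ (S.dim q)), S.mul_assoc]
      _ = S.mul (σ (S.dim q)) (S.smul (ν q) S.one) := by rw [h]
      _ = S.smul (ν q) (S.mul S.one (σ (S.dim q))) := by rw [S.mul_comm, S.smul_mul]
      _ = S.smul (ν q) (σ (S.dim q)) := by rw [S.one_mul]
  have hνs : ∀ (α : F) (A : D), ν (S.smul α (σ A)) = α := by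
    intro α A
    obtain ⟨r, hr⟩ := hinv A
    have hdq : S.dim (S.smul α (σ A)) = A := by rw [S.dim_smul, hsec]
    have h := hν (S.smul α (σ A)) r (by rw [hdq]; exact hr)
    rw [S.smul_mul, hr] at h
    exact hinj _ _ h
  constructor
  · intro hm
    have hν1 : ∀ A : D, ν (σ A) = 1 := by
      intro A
      have := hνs 1 A
      rwa [S.one_smul] at this
    have hmulσ : ∀ A B : D, σ (A * B) = S.mul (σ A) (σ B) := by
      intro A B
      have hd : S.dim (S.mul (σ A) (σ B)) = A * B := by rw [S.dim_mul, hsec, hsec]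
      have h := hval (S.mul (σ A) (σ B))
      rw [hm, hν1, hν1, _root_.one_mul, hd, S.one_smul] at h
      exact h.symm
    refine ⟨?_, hmulσ⟩
    have h11 : σ 1 = S.mul (σ 1) (σ 1) := by rw [← hmulσ, _root_.one_mul]
    obtain ⟨r, hr⟩ := hinv 1
    calc σ 1 = S.mul (σ 1) S.one := (S.one_mul _).symm.trans (S.mul_comm _ _)
      _ = S.mul (σ 1) (S.mul (σ 1) r) := by rw [hr]
      _ = S.mul (S.mul (σ 1) (σ 1)) r := (S.mul_assoc _ _ _).symm
      _ = S.mul (σ 1) r := by rw [← h11]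
      _ = S.one := hr
  · rintro ⟨h1, hc⟩ q r
    have key : S.mul q r = S.smul (ν q * ν r) (σ (S.dim (S.mul q r))) := by
      rw [S.dim_mul, hc]
      calc S.mul q r
          = S.mul (S.smul (ν q) (σ (S.dim q))) (S.smul (ν r) (σ (S.dim r))) := by
            rw [← hval, ← hval]
        _ = S.smul (ν q) (S.mul (σ (S.dim q)) (S.smul (ν r) (σ (S.dim r)))) :=
            S.smul_mul _ _ _
        _ = S.smul (ν q) (S.smul (ν r) (S.mul (σ (S.dim q)) (σ (S.dim r)))) := by
            rw [S.mul_comm (σ (S.dim q)), S.smul_mul, S.mul_comm]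
        _ = S.smul (ν q * ν r) (S.mul (σ (S.dim q)) (σ (S.dim r))) :=
            (S.mul_smul _ _ _).symm
    conv_lhs => rw [key]
    exact hνs _ _
end

section
/- A subset S of a space of quantities Q is a subspace (i.e., itself a space of quantities under the restricted operations and projection) if and only if S = dim⁻¹(ℰ) for some subgroup ℰ of the group of dimensions 𝒟. -/
variable {F : Type*} [Field F] {D D' : Type*} [CommGroup D] [CommGroup D']
  [Module.Free ℤ (Additive D)] [Module.Finite ℤ (Additive D)]
  [Module.Free ℤ (Additive D')] [Module.Finite ℤ (Additive D')]
  {Q R : Type*}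
open QuantitySpace

theorem subspace_characterization (S : QuantitySpace F D Q) (T : Set Q) :
    S.IsSubspace T ↔ ∃ E : Subgroup D, T = S.dim ⁻¹' (E : Set D) := by
  constructor
  · rintro ⟨hone, hmul, hadd, hsmul, hzero, hnz, hinv⟩
    refine ⟨{ carrier := S.dim '' T
              one_mem' := ⟨S.one, hone, S.dim_one⟩
              mul_mem' := ?_
              inv_mem' := ?_ }, ?_⟩
    · rintro a b ⟨q, hq, rfl⟩ ⟨r, hr, rfl⟩
      exact ⟨S.mul q r, hmul q hq r hr, S.dim_mul q r⟩
    · rintro a ⟨q, hq, rfl⟩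
      obtain ⟨r, hr, hdr⟩ := hinv q hq
      exact ⟨r, hr, hdr⟩
    · ext q
      simp only [Set.mem_preimage, SetLike.mem_coe, Subgroup.mem_mk, Set.mem_image]
      constructor
      · intro hq; exact ⟨q, hq, rfl⟩
      · rintro ⟨t, ht, hdt⟩
        obtain ⟨r, hr, hdr, hrne⟩ := hnz t ht
        obtain ⟨α, hα⟩ := S.fiber_gen r q (by rw [hdr, hdt]) (by rw [hdr]; exact hrne)
        rw [hα]; exact hsmul α r hr
  · rintro ⟨E, rfl⟩
    refine ⟨?_, ?_, ?_, ?_, ?_, ?_, ?_⟩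
    · exact Set.mem_preimage.mpr (by rw [S.dim_one]; exact one_mem E)
    · intro q hq r hr
      simp only [Set.mem_preimage, S.dim_mul]
      exact mul_mem hq hr
    · intro q hq r hr h
      simpa only [Set.mem_preimage, S.dim_add q r h] using hq
    · intro α q hq
      simpa only [Set.mem_preimage, S.dim_smul] using hq
    · intro q hq
      simpa only [Set.mem_preimage, S.dim_zero] using hq
    · intro q hq
      obtain ⟨r, hdr, hrne⟩ := S.exists_nonzero (S.dim q)
      exact ⟨r, by simpa [Set.mem_preimage, hdr] using hq, hdr, hrne⟩
    · intro q hq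
      obtain ⟨r, hr⟩ := S.dim_surj (S.dim q)⁻¹
      refine ⟨r, ?_, hr⟩
      simp only [Set.mem_preimage, SetLike.mem_coe] at hq ⊢
      rw [hr]; exact inv_mem hq
end

section
/- Every nonzero homomorphism of spaces of quantities ψ : Q → R induces a unique group homomorphism φ : 𝒟_Q → 𝒟_R satisfying dim_R ∘ ψ = φ ∘ dim_Q, and φ(1_{𝒟_Q}) = 1_{𝒟_R}; in particular ψ maps the dimensionless fiber of Q into the dimensionless fiber of R. -/
variable {F : Type*} [Field F] {D D' : Type*} [CommGroup D] [CommGroup D']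
  [Module.Free ℤ (Additive D)] [Module.Finite ℤ (Additive D)]
  [Module.Free ℤ (Additive D')] [Module.Finite ℤ (Additive D')]
  {Q R : Type*}
open QuantitySpace

namespace QuantitySpace

theorem dim_surjInv (S : QuantitySpace F D Q) (A : D) :
    S.dim (Function.surjInv S.dim_surj A) = A :=
  Function.surjInv_eq S.dim_surj A

namespace IsHom

variable {S : QuantitySpace F D Q} {T : QuantitySpace F D' R} {ψ : Q → R}

theorem dim_map_eq_of_dim_eq (hψ : IsHom S T ψ) {q₁ q₂ : Q} (h : S.dim q₁ = S.dim q₂) :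
    T.dim (ψ q₁) = T.dim (ψ q₂) :=
  hψ.2.1 q₁ q₂ h

theorem dim_map_mul (hψ : IsHom S T ψ) (q r : Q) :
    T.dim (ψ (S.mul q r)) = T.dim (ψ q) * T.dim (ψ r) := by
  rw [hψ.1, T.dim_mul]

noncomputable def dimHom (hψ : IsHom S T ψ) : D →* D' :=
  MonoidHom.mk' (fun A => T.dim (ψ (Function.surjInv S.dim_surj A))) fun A B => by
    have hAB : S.dim (Function.surjInv S.dim_surj (A * B)) =
        S.dim (S.mul (Function.surjInv S.dim_surj A) (Function.surjInv S.dim_surj B)) := by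
      rw [S.dim_mul, dim_surjInv, dim_surjInv, dim_surjInv]
    rw [hψ.dim_map_eq_of_dim_eq hAB, hψ.dim_map_mul]

theorem dim_map (hψ : IsHom S T ψ) (q : Q) : T.dim (ψ q) = hψ.dimHom (S.dim q) :=
  hψ.dim_map_eq_of_dim_eq (S.dim_surjInv _).symm

theorem eq_dimHom (hψ : IsHom S T ψ) {φ : D →* D'}
    (hφ : ∀ q : Q, T.dim (ψ q) = φ (S.dim q)) : φ = hψ.dimHom := by
  ext A
  have h := hφ (Function.surjInv S.dim_surj A)
  rw [hψ.dim_map, dim_surjInv] at h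
  exact h.symm

end IsHom

end QuantitySpace

theorem induced_dimension_hom_general (S : QuantitySpace F D Q) (T : QuantitySpace F D' R)
    (ψ : Q → R) (hψ : IsHom S T ψ) :
    (∃! φ : D →* D', ∀ q : Q, T.dim (ψ q) = φ (S.dim q)) ∧
    (∀ q : Q, S.dim q = 1 → T.dim (ψ q) = 1) := by
  refine ⟨⟨hψ.dimHom, hψ.dim_map, fun φ hφ => hψ.eq_dimHom hφ⟩, fun q hq => ?_⟩
  rw [hψ.dim_map, hq, map_one]

theorem induced_dimension_hom (S : QuantitySpace F D Q) (T : QuantitySpace F D' R)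
    (ψ : Q → R) (hψ : IsHom S T ψ) (hnz : ∃ q : Q, ¬ T.IsZero (ψ q)) :
    (∃! φ : D →* D', ∀ q : Q, T.dim (ψ q) = φ (S.dim q)) ∧
    (∀ q : Q, S.dim q = 1 → T.dim (ψ q) = 1) :=
  induced_dimension_hom_general S T ψ hψ
end
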